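/- In a unital category satisfying the condition that every morphism with zero kernel is a monomorphism, if k : X → A and l : Y → A are Bourn-normal monomorphisms whose pullback is a zero object, then k and l Huq-commute. -/

import Mathlib

open CategoryTheory CategoryTheory.Limits

universe v u

noncomputable section

variable {C : Type u} [Category.{v} C]

/-- A pair of morphisms with common codomain is jointly strongly epimorphic:
it has the lifting property against all monomorphisms. -/
def JointlyStrongEpi {X Y Z : C} (f : X ⟶ Z) (g : Y ⟶ Z) : Prop :=
  ∀ {U V : C} (m : U ⟶ V) (_ : Mono m) (h : Z ⟶ V) (u : X ⟶ U) (v : Y ⟶ U),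
    u ≫ m = f ≫ h → v ≫ m = g ≫ h → ∃ t : Z ⟶ U, t ≫ m = h

variable (C) in
/-- A unital category: pointed, finitely complete, and the product inclusions
`⟨1,0⟩ : X → X × Y` and `⟨0,1⟩ : Y → X × Y` are jointly strongly epimorphic. -/
class Unital [HasZeroObject C] [HasZeroMorphisms C] [HasFiniteLimits C] : Prop where
  jse : ∀ X Y : C, JointlyStrongEpi (prod.lift (𝟙 X) (0 : X ⟶ Y)) (prod.lift (0 : Y ⟶ X) (𝟙 Y))

/-- `f : X ⟶ A` and `g : Y ⟶ A` Huq-commute: there is a cooperator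
`φ : X × Y ⟶ A` with `φ∘⟨1,0⟩ = f` and `φ∘⟨0,1⟩ = g`. -/
def HuqCommute [HasZeroMorphisms C] [HasFiniteLimits C] {X Y A : C} (f : X ⟶ A) (g : Y ⟶ A) : Prop :=
  ∃ φ : X ⨯ Y ⟶ A, prod.lift (𝟙 X) 0 ≫ φ = f ∧ prod.lift 0 (𝟙 Y) ≫ φ = g

variable [HasZeroMorphisms C] [HasFiniteLimits C]

/-- `(r₁, r₂) : R ⇉ A` is an internal equivalence relation. -/
structure IsEquivRelation {R A : C} (r₁ r₂ : R ⟶ A) : Prop where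
  mono : Mono (prod.lift r₁ r₂)
  refl : ∃ e : A ⟶ R, e ≫ r₁ = 𝟙 A ∧ e ≫ r₂ = 𝟙 A
  symm : ∃ σ : R ⟶ R, σ ≫ r₁ = r₂ ∧ σ ≫ r₂ = r₁
  trans : ∃ τ : pullback r₂ r₁ ⟶ R,
    τ ≫ r₁ = pullback.fst r₂ r₁ ≫ r₁ ∧ τ ≫ r₂ = pullback.snd r₂ r₁ ≫ r₂

/-- A monomorphism `k : X ⟶ A` is Bourn-normal if it is the zero class of some internal
equivalence relation on `A`, i.e. `k` is the pullback of the relation's pairing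
`⟨r₁,r₂⟩ : R → A × A` along `⟨1,0⟩ : A → A × A`. -/
def BournNormal {X A : C} (k : X ⟶ A) : Prop :=
  Mono k ∧ ∃ (R : C) (r₁ r₂ : R ⟶ A) (_ : IsEquivRelation r₁ r₂) (κ : X ⟶ R),
    IsPullback κ k (prod.lift r₁ r₂) (prod.lift (𝟙 A) 0)

/-!
Let `X` and `Y` be the zero classes of equivalence relations `R` and `S` on `A`. The object
`U = {(ρ, σ) ∈ R × S | r₁ ρ = s₂ σ}` of chains `s₁ σ ~S a ~R r₂ ρ` maps to `A × A` by
`μ (ρ, σ) = (s₁ σ, r₂ ρ)`. A chain in the kernel of `μ` has the form `0 ~S a ~R 0`, so `a` lies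
in `X ∩ Y = 0`, and then `ρ = σ = 0`; hence `μ` is a monomorphism. The maps
`x ↦ (κ x, eS (k x))` and `y ↦ (eR (l y), sw (ν y))` (with `e` the reflexivity and `sw` the
symmetry maps) are sent by `μ` to `(k x, 0)` and `(0, l y)`, so unitality provides
`t : X × Y → U` with `μ ∘ t = k × l`, and `r₁ ∘ pr_R ∘ t` is a cooperator of `k` and `l`.
-/

attribute [local simp] prod.lift_fst prod.lift_snd prod.lift_fst_assoc prod.lift_snd_assoc
  pullback.lift_fst pullback.lift_snd pullback.lift_fst_assoc pullback.lift_snd_assoc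

abbrev IsZeroClass {X A R : C} (κ : X ⟶ R) (k : X ⟶ A) (r₁ r₂ : R ⟶ A) : Prop :=
  IsPullback κ k (prod.lift r₁ r₂) (prod.lift (𝟙 A) 0)

namespace IsZeroClass

variable {X A R : C} {κ : X ⟶ R} {k : X ⟶ A} {r₁ r₂ : R ⟶ A}

lemma comp_fst (h : IsZeroClass κ k r₁ r₂) : κ ≫ r₁ = k := by
  simpa using h.w =≫ prod.fst

lemma comp_snd (h : IsZeroClass κ k r₁ r₂) : κ ≫ r₂ = 0 := by
  simpa using h.w =≫ prod.snd

lemma exists_lift (h : IsZeroClass κ k r₁ r₂) {W : C} (ρ : W ⟶ R) (hρ : ρ ≫ r₂ = 0) :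
    ∃ x : W ⟶ X, x ≫ κ = ρ ∧ x ≫ k = ρ ≫ r₁ :=
  ⟨h.lift ρ (ρ ≫ r₁) (by ext <;> simp [hρ]), h.lift_fst _ _ _, h.lift_snd _ _ _⟩

end IsZeroClass

lemma isZero_kernel_of_forall_eq_zero {A B : C} {f : A ⟶ B}
    (hf : ∀ {W : C} (z : W ⟶ A), z ≫ f = 0 → z = 0) : IsZero (kernel f) :=
  IsZero.of_mono_eq_zero _ (hf _ (kernel.condition f))

lemma Unital.huqCommute_of_mono [HasZeroObject C] [Unital C] {X Y A U B : C}
    {f : X ⟶ A} {g : Y ⟶ A} (μ : U ⟶ B) [Mono μ] (h : X ⨯ Y ⟶ B) (p : U ⟶ A)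
    (u : X ⟶ U) (v : Y ⟶ U) (hu : u ≫ μ = prod.lift (𝟙 X) 0 ≫ h)
    (hv : v ≫ μ = prod.lift 0 (𝟙 Y) ≫ h) (hup : u ≫ p = f) (hvp : v ≫ p = g) :
    HuqCommute f g := by
  obtain ⟨t, ht⟩ := Unital.jse X Y μ inferInstance h u v hu hv
  have htu : prod.lift (𝟙 X) 0 ≫ t = u := by rw [← cancel_mono μ, Category.assoc, ht, hu]
  have htv : prod.lift 0 (𝟙 Y) ≫ t = v := by rw [← cancel_mono μ, Category.assoc, ht, hv]
  exact ⟨t ≫ p, by rw [← Category.assoc, htu, hup], by rw [← Category.assoc, htv, hvp]⟩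

section RelComp

variable {X Y A R S : C} {k : X ⟶ A} {l : Y ⟶ A} {r₁ r₂ : R ⟶ A} {s₁ s₂ : S ⟶ A}
  {κ : X ⟶ R} {ν : Y ⟶ S}

abbrev relCompPair (r₁ r₂ : R ⟶ A) (s₁ s₂ : S ⟶ A) : pullback r₁ s₂ ⟶ A ⨯ A :=
  prod.lift (pullback.snd r₁ s₂ ≫ s₁) (pullback.fst r₁ s₂ ≫ r₂)

lemma eq_zero_of_chain_from_zero_to_zero (hκ : IsZeroClass κ k r₁ r₂)
    (hν : IsZeroClass ν l s₁ s₂) (hS : IsEquivRelation s₁ s₂) (hmeet : IsZero (pullback k l))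
    {W : C} {ρ : W ⟶ R} {σ : W ⟶ S} (hρσ : ρ ≫ r₁ = σ ≫ s₂) (hρ : ρ ≫ r₂ = 0)
    (hσ : σ ≫ s₁ = 0) : ρ = 0 ∧ σ = 0 := by
  obtain ⟨sw, hsw₁, hsw₂⟩ := hS.symm
  obtain ⟨x, hxκ, hxk⟩ := hκ.exists_lift ρ hρ
  obtain ⟨y, -, hyl⟩ := hν.exists_lift (σ ≫ sw) (by rw [Category.assoc, hsw₂, hσ])
  have hxy : x ≫ k = y ≫ l := by rw [hxk, hyl, Category.assoc, hsw₁, hρσ]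
  have hx : x = 0 := by
    simpa using hmeet.eq_of_tgt (pullback.lift x y hxy) 0 =≫ pullback.fst k l
  have ha : ρ ≫ r₁ = 0 := by rw [← hxk, hx, zero_comp]
  have := hS.mono
  refine ⟨by rw [← hxκ, hx, zero_comp], ?_⟩
  rw [← cancel_mono (prod.lift s₁ s₂)]
  ext <;> simp [hσ, ← hρσ, ha]

lemma isZero_kernel_relCompPair (hκ : IsZeroClass κ k r₁ r₂) (hν : IsZeroClass ν l s₁ s₂)
    (hS : IsEquivRelation s₁ s₂) (hmeet : IsZero (pullback k l)) :
    IsZero (kernel (relCompPair r₁ r₂ s₁ s₂)) := by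
  refine isZero_kernel_of_forall_eq_zero fun z hz ↦ ?_
  obtain ⟨hρ, hσ⟩ := eq_zero_of_chain_from_zero_to_zero hκ hν hS hmeet
    (ρ := z ≫ pullback.fst r₁ s₂) (σ := z ≫ pullback.snd r₁ s₂)
    (by simp only [Category.assoc, pullback.condition]) (by simpa using hz =≫ prod.snd)
    (by simpa using hz =≫ prod.fst)
  ext <;> simp [hρ, hσ]

end RelComp

theorem stmt13 [HasZeroObject C] [Unital C]
    (hcond : ∀ {A B : C} (f : A ⟶ B), IsZero (kernel f) → Mono f)
    {X Y A : C} (k : X ⟶ A) (l : Y ⟶ A)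
    (hk : BournNormal k) (hl : BournNormal l)
    (hmeet : IsZero (pullback k l)) :
    HuqCommute k l := by
  obtain ⟨-, R, r₁, r₂, hR, κ, hκ⟩ := hk
  obtain ⟨-, S, s₁, s₂, hS, ν, hν⟩ := hl
  replace hκ : IsZeroClass κ k r₁ r₂ := hκ
  replace hν : IsZeroClass ν l s₁ s₂ := hν
  obtain ⟨eR, heR₁, heR₂⟩ := hR.refl
  obtain ⟨eS, heS₁, heS₂⟩ := hS.refl
  obtain ⟨sw, hsw₁, hsw₂⟩ := hS.symm
  have := hcond _ (isZero_kernel_relCompPair hκ hν hS hmeet)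
  refine Unital.huqCommute_of_mono (relCompPair r₁ r₂ s₁ s₂) (prod.map k l)
    (pullback.fst r₁ s₂ ≫ r₁)
    (pullback.lift κ (k ≫ eS) (by rw [hκ.comp_fst, Category.assoc, heS₂, Category.comp_id]))
    (pullback.lift (l ≫ eR) (ν ≫ sw) (by simp [heR₁, hsw₂, hν.comp_fst]))
    ?_ ?_ (by simp [hκ.comp_fst]) (by simp [heR₁])
  · ext <;> simp [heS₁, hκ.comp_snd]
  · ext <;> simp [heR₂, hsw₁, hν.comp_snd]
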